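/- Fix t ∈ ℝ, y ∈ E and h > 0. Let H̃ be a linear map on E with ‖id − (∇²_y F(t,y)) ∘ H̃‖ ≤ ε, and define the predicted point ŷ := y − h·H̃(∂_t ∇_y F(t,y)). Then ‖ŷ − y*(t+h)‖ ≤ σ·‖y − y*(t)‖ + h·(C0/m)·ε + h²·Δ, where σ = 1 + h(C0C1/m² + C2/m) and Δ = C0²C1/(2m³) + C0C2/m² + C3/(2m). -/

import Mathlib

/-!
Let `v := -(∇²F)⁻¹ ∂ₜ∇F` at `(t, y*(t))`, the velocity of the minimizer path. Expanding `∇F` to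
second order in `(t, y)` around `(t, y*(t))` and using strong monotonicity of `∇F(t+h, ·)` gives
`‖y*(t+h) - y*(t) - h v‖ ≤ h²Δ`. The predicted velocity `-H̃ ∂ₜ∇F(t, y)` differs from `v` by the
inverse-Hessian error `(C0/m) ε` plus `(C0C1/m² + C2/m) ‖y - y*(t)‖`, the cost of evaluating the
Hessian and `∂ₜ∇F` at `y` instead of `y*(t)`; the triangle inequality assembles the bound.
-/

open scoped InnerProductSpace

local notation "E" n => EuclideanSpace ℝ (Fin n)

open Set

section Taylor

variable {V W : Type*} [NormedAddCommGroup V] [NormedSpace ℝ V]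
  [NormedAddCommGroup W] [NormedSpace ℝ W]

theorem norm_sub_sub_smul_le_of_norm_deriv_sub_le {g g' : ℝ → W} {a b K : ℝ} (hab : a ≤ b)
    (hg : ∀ x ∈ Icc a b, HasDerivAt g (g' x) x)
    (hg' : ∀ x ∈ Icc a b, ‖g' x - g' a‖ ≤ K * (x - a)) :
    ‖g b - g a - (b - a) • g' a‖ ≤ K * (b - a) ^ 2 / 2 := by
  have hR : ∀ x ∈ Icc a b,
      HasDerivAt (fun x => g x - g a - (x - a) • g' a) (g' x - g' a) x := fun x hx => by
    simpa using ((hg x hx).sub_const (g a)).fun_sub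
      (((hasDerivAt_id x).sub_const a).smul_const (g' a))
  have hB : ∀ x, HasDerivAt (fun x => K * (x - a) ^ 2 / 2) (K * (x - a)) x := fun x =>
    ((((hasDerivAt_id' x).sub_const a).fun_pow 2).const_mul K).div_const 2 |>.congr_deriv
      (by ring)
  refine image_norm_le_of_norm_deriv_right_le_deriv_boundary
    (fun x hx => (hR x hx).continuousAt.continuousWithinAt)
    (fun x hx => (hR x (Ico_subset_Icc_self hx)).hasDerivWithinAt) (by simp) hB
    (fun x hx => hg' x (Ico_subset_Icc_self hx)) (right_mem_Icc.2 hab)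

theorem norm_sub_sub_smul_le_of_norm_deriv2_le {g g' g'' : ℝ → W} {a b C : ℝ} (hab : a ≤ b)
    (hg : ∀ x ∈ Icc a b, HasDerivAt g (g' x) x) (hg' : ∀ x ∈ Icc a b, HasDerivAt g' (g'' x) x)
    (hC : ∀ x ∈ Icc a b, ‖g'' x‖ ≤ C) :
    ‖g b - g a - (b - a) • g' a‖ ≤ C * (b - a) ^ 2 / 2 :=
  norm_sub_sub_smul_le_of_norm_deriv_sub_le hab hg
    (norm_image_sub_le_of_norm_deriv_le_segment' (fun x hx => (hg' x hx).hasDerivWithinAt)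
      fun x hx => hC x (Ico_subset_Icc_self hx))

theorem norm_sub_sub_apply_le_of_lipschitz_fderiv {f : V → W} {f' : V → V →L[ℝ] W} {K : ℝ}
    (hf : ∀ x, HasFDerivAt f (f' x) x) (hK : ∀ x y, ‖f' x - f' y‖ ≤ K * ‖x - y‖) (z w : V) :
    ‖f (z + w) - f z - f' z w‖ ≤ K * ‖w‖ ^ 2 / 2 := by
  have hg : ∀ r : ℝ, HasDerivAt (fun r : ℝ => f (z + r • w)) (f' (z + r • w) w) r := fun r =>
    (hf _).comp_hasDerivAt r (by simpa using ((hasDerivAt_id r).smul_const w).const_add z)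
  have hg' : ∀ r ∈ Icc (0 : ℝ) 1,
      ‖f' (z + r • w) w - f' (z + (0 : ℝ) • w) w‖ ≤ K * ‖w‖ ^ 2 * (r - 0) := fun r hr => by
    calc ‖f' (z + r • w) w - f' (z + (0 : ℝ) • w) w‖
        = ‖(f' (z + r • w) - f' z) w‖ := by simp
      _ ≤ ‖f' (z + r • w) - f' z‖ * ‖w‖ := ContinuousLinearMap.le_opNorm _ _
      _ ≤ K * ‖r • w‖ * ‖w‖ := by
          gcongr
          simpa using hK (z + r • w) z
      _ = K * ‖w‖ ^ 2 * (r - 0) := by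
          rw [norm_smul, Real.norm_of_nonneg hr.1]
          ring
  simpa using norm_sub_sub_smul_le_of_norm_deriv_sub_le zero_le_one (fun r _ => hg r) hg'

theorem norm_taylor_remainder_space_time_le {G Gt Gtt : ℝ → V → W} {H : ℝ → V → V →L[ℝ] W}
    {C1 C2 C3 h : ℝ} (hh : 0 ≤ h)
    (hH : ∀ s x, HasFDerivAt (G s) (H s x) x)
    (hGt : ∀ s x, HasDerivAt (fun s => G s x) (Gt s x) s)
    (hGtt : ∀ s x, HasDerivAt (fun s => Gt s x) (Gtt s x) s)
    (hH_lip : ∀ s x x', ‖H s x - H s x'‖ ≤ C1 * ‖x - x'‖)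
    (hGt_lip : ∀ s x x', ‖Gt s x - Gt s x'‖ ≤ C2 * ‖x - x'‖)
    (hGtt_le : ∀ s x, ‖Gtt s x‖ ≤ C3) (t : ℝ) (z w : V) :
    ‖G (t + h) (z + w) - G t z - h • Gt t z - H t z w‖
      ≤ C3 * h ^ 2 / 2 + C2 * h * ‖w‖ + C1 * ‖w‖ ^ 2 / 2 := by
  have htime : ‖G (t + h) (z + w) - G t (z + w) - h • Gt t (z + w)‖ ≤ C3 * h ^ 2 / 2 := by
    simpa using norm_sub_sub_smul_le_of_norm_deriv2_le (le_add_of_nonneg_right hh)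
      (fun s _ => hGt s (z + w)) (fun s _ => hGtt s (z + w)) (fun s _ => hGtt_le s (z + w))
  have hspace : ‖G t (z + w) - G t z - H t z w‖ ≤ C1 * ‖w‖ ^ 2 / 2 :=
    norm_sub_sub_apply_le_of_lipschitz_fderiv (hH t) (hH_lip t) z w
  have hmixed : ‖h • (Gt t (z + w) - Gt t z)‖ ≤ C2 * h * ‖w‖ := by
    rw [norm_smul, Real.norm_of_nonneg hh, mul_comm C2, mul_assoc]
    gcongr
    simpa using hGt_lip t (z + w) z
  calc ‖G (t + h) (z + w) - G t z - h • Gt t z - H t z w‖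
      = ‖(G (t + h) (z + w) - G t (z + w) - h • Gt t (z + w))
          + h • (Gt t (z + w) - Gt t z) + (G t (z + w) - G t z - H t z w)‖ := by
        rw [smul_sub]; congr 1; abel
    _ ≤ C3 * h ^ 2 / 2 + C2 * h * ‖w‖ + C1 * ‖w‖ ^ 2 / 2 :=
        (norm_add₃_le).trans (add_le_add (add_le_add htime hmixed) hspace)

end Taylor

section Linear

variable {V : Type*} [NormedAddCommGroup V] [NormedSpace ℝ V]

theorem norm_neg_apply_sub_le {A B P : V →L[ℝ] V} {g g' v : V} {m ε C0 C1 C2 d : ℝ}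
    (hm : 0 < m) (hA : ∀ u, m * ‖u‖ ≤ ‖A u‖) (hP : ‖ContinuousLinearMap.id ℝ V - A.comp P‖ ≤ ε)
    (hv : B v = -g') (hg : ‖g‖ ≤ C0) (hg' : ‖g' - g‖ ≤ C2 * d) (hAB : ‖A - B‖ ≤ C1 * d)
    (hv_le : ‖v‖ ≤ C0 / m) :
    ‖-P g - v‖ ≤ C0 / m * ε + (C0 * C1 / m ^ 2 + C2 / m) * d := by
  have hε : 0 ≤ ε := (norm_nonneg _).trans hP
  have hC1d : 0 ≤ C1 * d := (norm_nonneg _).trans hAB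
  refine le_of_mul_le_mul_left ?_ hm
  calc m * ‖-P g - v‖ ≤ ‖A (-P g - v)‖ := hA _
    _ = ‖(ContinuousLinearMap.id ℝ V - A.comp P) g + (g' - g) - (A - B) v‖ := by
        congr 1
        simp only [map_sub, map_neg, sub_apply, ContinuousLinearMap.id_apply,
          ContinuousLinearMap.comp_apply, hv]
        abel
    _ ≤ ‖(ContinuousLinearMap.id ℝ V - A.comp P) g‖ + ‖g' - g‖ + ‖(A - B) v‖ :=
        (norm_sub_le _ _).trans (add_le_add_left (norm_add_le _ _) _)
    _ ≤ ε * C0 + C2 * d + C1 * d * (C0 / m) := by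
        gcongr
        · exact (ContinuousLinearMap.le_opNorm _ _).trans (by gcongr)
        · exact (ContinuousLinearMap.le_opNorm _ _).trans (by gcongr)
    _ = m * (C0 / m * ε + (C0 * C1 / m ^ 2 + C2 / m) * d) := by field_simp; ring

end Linear

section InnerProduct

variable {V : Type*} [NormedAddCommGroup V] [InnerProductSpace ℝ V]

theorem mul_norm_le_norm_of_mul_sq_le_inner {m : ℝ} {x u : V} (h : m * ‖u‖ ^ 2 ≤ ⟪x, u⟫_ℝ) :
    m * ‖u‖ ≤ ‖x‖ := by
  rcases (norm_nonneg u).eq_or_lt with hu | hu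
  · simp [← hu]
  refine le_of_mul_le_mul_right ?_ hu
  nlinarith [real_inner_le_norm x u]

theorem mul_sq_norm_sub_le_inner_sub {f : V → V} {f' : V → V →L[ℝ] V} {m : ℝ}
    (hf : ∀ x, HasFDerivAt f (f' x) x) (hm : ∀ x v, m * ‖v‖ ^ 2 ≤ ⟪f' x v, v⟫_ℝ) (a b : V) :
    m * ‖a - b‖ ^ 2 ≤ ⟪f a - f b, a - b⟫_ℝ := by
  set u := a - b
  have hφ : ∀ r : ℝ, HasDerivAt (fun r : ℝ => ⟪f (b + r • u), u⟫_ℝ) ⟪f' (b + r • u) u, u⟫_ℝ r :=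
    fun r => by
      have hc : HasDerivAt (fun r : ℝ => f (b + r • u)) (f' (b + r • u) u) r :=
        (hf _).comp_hasDerivAt r (by simpa using ((hasDerivAt_id r).smul_const u).const_add b)
      simpa using hc.inner ℝ (hasDerivAt_const r u)
  have := mul_sub_le_image_sub_of_le_deriv (fun r => (hφ r).differentiableAt)
    (fun r => (hφ r).deriv ▸ hm _ u) zero_le_one
  simpa [u, inner_sub_left] using this

theorem IsLocalMin.hasGradientAt_eq_zero [CompleteSpace V] {f : V → ℝ} {x g : V}
    (h : IsLocalMin f x) (hf : HasGradientAt f g x) : g = 0 := by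
  simpa using h.hasFDerivAt_eq_zero hf.hasFDerivAt

theorem ContinuousLinearMap.surjective_of_mul_norm_le [FiniteDimensional ℝ V]
    {A : V →L[ℝ] V} {m : ℝ} (hm : 0 < m) (hA : ∀ v, m * ‖v‖ ≤ ‖A v‖) :
    Function.Surjective A := by
  refine LinearMap.injective_iff_surjective.mp fun a b (hab : A a = A b) => ?_
  have := hA (a - b)
  rw [map_sub, hab, sub_self, norm_zero] at this
  exact sub_eq_zero.mp (norm_le_zero_iff.mp (nonpos_of_mul_nonpos_right this hm))

theorem norm_minimizer_sub_sub_smul_le {G Gt Gtt : ℝ → V → V} {H : ℝ → V → V →L[ℝ] V}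
    {ystar : ℝ → V} {m C0 C1 C2 C3 t h : ℝ} {v : V} (hm : 0 < m) (hh : 0 ≤ h)
    (hC1 : 0 ≤ C1) (hC2 : 0 ≤ C2)
    (hH : ∀ s x, HasFDerivAt (G s) (H s x) x)
    (hGt : ∀ s x, HasDerivAt (fun s => G s x) (Gt s x) s)
    (hGtt : ∀ s x, HasDerivAt (fun s => Gt s x) (Gtt s x) s)
    (hH_coer : ∀ s x u, m * ‖u‖ ^ 2 ≤ ⟪H s x u, u⟫_ℝ)
    (hH_lip : ∀ s x x', ‖H s x - H s x'‖ ≤ C1 * ‖x - x'‖)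
    (hGt_lip : ∀ s x x', ‖Gt s x - Gt s x'‖ ≤ C2 * ‖x - x'‖)
    (hGtt_le : ∀ s x, ‖Gtt s x‖ ≤ C3)
    (hzero : ∀ s, G s (ystar s) = 0) (hv : H t (ystar t) v = -Gt t (ystar t))
    (hv_le : ‖v‖ ≤ C0 / m) :
    ‖ystar (t + h) - ystar t - h • v‖
      ≤ h ^ 2 * (C0 ^ 2 * C1 / (2 * m ^ 3) + C0 * C2 / m ^ 2 + C3 / (2 * m)) := by
  have hmono := mul_norm_le_norm_of_mul_sq_le_inner
    (mul_sq_norm_sub_le_inner_sub (hH (t + h)) (hH_coer (t + h)) (ystar t + h • v) (ystar (t + h)))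
  have hexp := norm_taylor_remainder_space_time_le hh hH hGt hGtt hH_lip hGt_lip hGtt_le t (ystar t) (h • v)
  rw [map_smul, hv, hzero] at hexp
  rw [hzero, ← norm_neg] at hmono
  refine le_of_mul_le_mul_left ?_ hm
  calc m * ‖ystar (t + h) - ystar t - h • v‖
      = m * ‖-(ystar t + h • v - ystar (t + h))‖ := by congr 2; abel
    _ ≤ _ := hmono
    _ = _ := by congr 1; simp only [smul_neg]; abel
    _ ≤ _ := hexp
    _ = C3 * h ^ 2 / 2 + C2 * h * (h * ‖v‖) + C1 * (h * ‖v‖) ^ 2 / 2 := by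
        rw [norm_smul, Real.norm_of_nonneg hh]
    _ ≤ C3 * h ^ 2 / 2 + C2 * h * (h * (C0 / m)) + C1 * (h * (C0 / m)) ^ 2 / 2 := by gcongr
    _ = _ := by field_simp; ring

end InnerProduct

theorem stmt_16_general {n : ℕ}
    (F : ℝ → (E n) → ℝ)
    (Fgrad : ℝ → (E n) → (E n))
    (Hess : ℝ → (E n) → (E n) →L[ℝ] (E n))
    (Gt Gtt : ℝ → (E n) → (E n))
    (m C0 C1 C2 C3 : ℝ)
    (hm : 0 < m)
    (hC1 : 0 ≤ C1) (hC2 : 0 ≤ C2)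
    (hgrad : ∀ t y, HasGradientAt (F t) (Fgrad t y) y)
    (hhess : ∀ t y, HasFDerivAt (Fgrad t) (Hess t y) y)
    (ht : ∀ t y, HasDerivAt (fun s => Fgrad s y) (Gt t y) t)
    (htt : ∀ t y, HasDerivAt (fun s => Gt s y) (Gtt t y) t)
    (hstrong : ∀ t y (v : E n), m * ‖v‖ ^ 2 ≤ ⟪Hess t y v, v⟫_ℝ)
    (hC0b : ∀ t y, ‖Gt t y‖ ≤ C0)
    (hC1b : ∀ t y y', ‖Hess t y - Hess t y'‖ ≤ C1 * ‖y - y'‖)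
    (hC2b : ∀ t y y', ‖Gt t y - Gt t y'‖ ≤ C2 * ‖y - y'‖)
    (hC3b : ∀ t y, ‖Gtt t y‖ ≤ C3)
    (ystar : ℝ → E n)
    (hmin : ∀ t, IsMinOn (F t) Set.univ (ystar t))
    (h ε Δ σ : ℝ) (hh : 0 < h)
    (hΔ : Δ = C0 ^ 2 * C1 / (2 * m ^ 3) + C0 * C2 / m ^ 2 + C3 / (2 * m))
    (hσ : σ = 1 + h * (C0 * C1 / m ^ 2 + C2 / m)) :
    ∀ (t : ℝ) (y : E n) (Htil : (E n) →L[ℝ] (E n)),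
      ‖ContinuousLinearMap.id ℝ (E n) - (Hess t y).comp Htil‖ ≤ ε →
        ‖(y - h • Htil (Gt t y)) - ystar (t + h)‖
          ≤ σ * ‖y - ystar t‖ + h * (C0 / m) * ε + h ^ 2 * Δ := by
  intro t y Htil hHtil
  have hHess : ∀ s x u, m * ‖u‖ ≤ ‖Hess s x u‖ := fun s x u =>
    mul_norm_le_norm_of_mul_sq_le_inner (hstrong s x u)
  have hzero : ∀ s, Fgrad s (ystar s) = 0 := fun s =>
    ((hmin s).isLocalMin Filter.univ_mem).hasGradientAt_eq_zero (hgrad s (ystar s))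
  obtain ⟨v, hv⟩ := (Hess t (ystar t)).surjective_of_mul_norm_le hm (hHess t (ystar t))
    (-Gt t (ystar t))
  have hv_le : ‖v‖ ≤ C0 / m := by
    rw [le_div_iff₀' hm]
    calc m * ‖v‖ ≤ ‖Hess t (ystar t) v‖ := hHess t (ystar t) v
      _ = ‖Gt t (ystar t)‖ := by rw [hv, norm_neg]
      _ ≤ C0 := hC0b t (ystar t)
  have hpath := norm_minimizer_sub_sub_smul_le hm hh.le hC1 hC2 hhess ht htt hstrong hC1b hC2b
    hC3b hzero hv hv_le
  have hstep := norm_neg_apply_sub_le hm (hHess t y) hHtil hv (hC0b t y)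
    (by simpa only [norm_sub_rev] using hC2b t (ystar t) y) (hC1b t y (ystar t)) hv_le
  rw [hσ, hΔ]
  calc ‖(y - h • Htil (Gt t y)) - ystar (t + h)‖
      = ‖(y - ystar t) + h • (-Htil (Gt t y) - v) - (ystar (t + h) - ystar t - h • v)‖ := by
        congr 1; module
    _ ≤ ‖y - ystar t‖ + ‖h • (-Htil (Gt t y) - v)‖ + ‖ystar (t + h) - ystar t - h • v‖ :=
        norm_sub_le_of_le (norm_add_le _ _) le_rfl
    _ = ‖y - ystar t‖ + h * ‖-Htil (Gt t y) - v‖ + ‖ystar (t + h) - ystar t - h • v‖ := by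
        rw [norm_smul, Real.norm_of_nonneg hh.le]
    _ ≤ ‖y - ystar t‖ + h * (C0 / m * ε + (C0 * C1 / m ^ 2 + C2 / m) * ‖y - ystar t‖)
          + h ^ 2 * (C0 ^ 2 * C1 / (2 * m ^ 3) + C0 * C2 / m ^ 2 + C3 / (2 * m)) := by gcongr
    _ = _ := by ring

/-- one-step prediction error bound. If H̃ approximates the
Hessian inverse at (t, y) with relative error ε, then the predicted point
ŷ = y − h·H̃(∂ₜ∇F(t,y)) satisfies
‖ŷ − y*(t+h)‖ ≤ σ‖y − y*(t)‖ + h(C0/m)ε + h²Δ. -/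
theorem stmt_16 {n : ℕ} (hn : 1 ≤ n)
    (F : ℝ → (E n) → ℝ)
    (Fgrad : ℝ → (E n) → (E n))
    (Hess : ℝ → (E n) → (E n) →L[ℝ] (E n))
    (Gt Gtt : ℝ → (E n) → (E n))
    (m L' C0 C1 C2 C3 : ℝ)
    (hm : 0 < m) (hmL : m ≤ L')
    (hC0 : 0 ≤ C0) (hC1 : 0 ≤ C1) (hC2 : 0 ≤ C2) (hC3 : 0 ≤ C3)
    (hF2 : ∀ t, ContDiff ℝ 2 (F t))
    (hG1 : ContDiff ℝ 1 (Function.uncurry Fgrad))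
    (hgrad : ∀ t y, HasGradientAt (F t) (Fgrad t y) y)
    (hhess : ∀ t y, HasFDerivAt (Fgrad t) (Hess t y) y)
    (ht : ∀ t y, HasDerivAt (fun s => Fgrad s y) (Gt t y) t)
    (htt : ∀ t y, HasDerivAt (fun s => Gt s y) (Gtt t y) t)
    (hstrong : ∀ t y (v : E n), m * ‖v‖ ^ 2 ≤ ⟪Hess t y v, v⟫_ℝ)
    (hsmooth : ∀ t y (v : E n), ⟪Hess t y v, v⟫_ℝ ≤ L' * ‖v‖ ^ 2)
    (hC0b : ∀ t y, ‖Gt t y‖ ≤ C0)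
    (hC1b : ∀ t y y', ‖Hess t y - Hess t y'‖ ≤ C1 * ‖y - y'‖)
    (hC2b : ∀ t y y', ‖Gt t y - Gt t y'‖ ≤ C2 * ‖y - y'‖)
    (hC3b : ∀ t y, ‖Gtt t y‖ ≤ C3)
    (ystar : ℝ → E n)
    (hmin : ∀ t, IsMinOn (F t) Set.univ (ystar t))
    (h ε Δ σ : ℝ) (hh : 0 < h) (hε : 0 ≤ ε)
    (hΔ : Δ = C0 ^ 2 * C1 / (2 * m ^ 3) + C0 * C2 / m ^ 2 + C3 / (2 * m))
    (hσ : σ = 1 + h * (C0 * C1 / m ^ 2 + C2 / m)) :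
    ∀ (t : ℝ) (y : E n) (Htil : (E n) →L[ℝ] (E n)),
      ‖ContinuousLinearMap.id ℝ (E n) - (Hess t y).comp Htil‖ ≤ ε →
        ‖(y - h • Htil (Gt t y)) - ystar (t + h)‖
          ≤ σ * ‖y - ystar t‖ + h * (C0 / m) * ε + h ^ 2 * Δ :=
  stmt_16_general F Fgrad Hess Gt Gtt m C0 C1 C2 C3 hm hC1 hC2 hgrad hhess ht htt hstrong hC0b hC1b
    hC2b hC3b ystar hmin h ε Δ σ hh hΔ hσ
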